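/- arXiv:math/0202064 — 5 statements merged into one kernel-verified Lean document; each statement's English description precedes it below -/
import Mathlib

section
/- For every integer N ≥ 0, B(N) = S(N), i.e. ∫_{[0,1]^3} x^N(1−x)^N y^N(1−y)^N z^N(1−z)^N / (1−z(1−y(1−x)))^{N+1} dx dy dz = ∫_{[0,1]^3} x^N(1−x)^N y^N(1−y)^N z^N(1−z)^N / ((1−xy)^{N+1}(1−xyz)^{N+1}) dx dy dz. -/
open MeasureTheory Finset
open scoped ENNReal

noncomputable section

/-- The unit cube `[0,1]^n`. -/
def cube (n : ℕ) : Set (Fin n → ℝ) := Set.univ.pi fun _ => Set.Icc (0:ℝ) 1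

/-- The `k`-th coordinate (1-based indexing) of `x`. -/
def ent {n : ℕ} (x : Fin n → ℝ) (k : ℕ) : ℝ := if h : k - 1 < n then x ⟨k - 1, h⟩ else 0

namespace BeukersSorokinAux

/-- The open unit cube. -/
def ocube : Set (Fin 3 → ℝ) := Set.univ.pi fun _ => Set.Ioo (0:ℝ) 1

lemma mem_ocube {x : Fin 3 → ℝ} : x ∈ ocube ↔ ∀ i, 0 < x i ∧ x i < 1 := by
  simp [ocube, Set.mem_univ_pi, Set.mem_Ioo]

/-- The change of variables. -/
def phi (x : Fin 3 → ℝ) : Fin 3 → ℝ :=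
  ![x 2, (1 - x 1) / (1 - x 0 * x 1 * x 2), x 0]

lemma phi0 (x : Fin 3 → ℝ) : phi x 0 = x 2 := rfl
lemma phi1 (x : Fin 3 → ℝ) : phi x 1 = (1 - x 1) / (1 - x 0 * x 1 * x 2) := rfl
lemma phi2 (x : Fin 3 → ℝ) : phi x 2 = x 0 := rfl

/-- Jacobian matrix of `phi`. -/
def M3 (x : Fin 3 → ℝ) : Matrix (Fin 3) (Fin 3) ℝ :=
  ![![0, 0, 1],
    ![(1 - x 1) * (x 1 * x 2) / (1 - x 0 * x 1 * x 2) ^ 2,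
      (x 0 * x 2 - 1) / (1 - x 0 * x 1 * x 2) ^ 2,
      (1 - x 1) * (x 0 * x 1) / (1 - x 0 * x 1 * x 2) ^ 2],
    ![1, 0, 0]]

/-- Jacobian of `phi` as a continuous linear map. -/
def D3 (x : Fin 3 → ℝ) : (Fin 3 → ℝ) →L[ℝ] (Fin 3 → ℝ) :=
  LinearMap.toContinuousLinearMap (Matrix.toLin' (M3 x))

lemma hP_pos {x : Fin 3 → ℝ} (hx : x ∈ ocube) : 0 < 1 - x 0 * x 1 * x 2 := by
  have h0 := (mem_ocube.1 hx) 0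
  have h1 := (mem_ocube.1 hx) 1
  have h2 := (mem_ocube.1 hx) 2
  have h01 : x 0 * x 1 < 1 := by nlinarith [h0.1, h0.2, h1.1, h1.2]
  nlinarith [h01, h2.1, h2.2, mul_pos h0.1 h1.1]

lemma hQ_pos {x : Fin 3 → ℝ} (hx : x ∈ ocube) : 0 < 1 - x 0 * x 2 := by
  have h0 := (mem_ocube.1 hx) 0
  have h2 := (mem_ocube.1 hx) 2
  nlinarith [h0.1, h0.2, h2.1, h2.2]

lemma hXY_pos {x : Fin 3 → ℝ} (hx : x ∈ ocube) : 0 < 1 - x 0 * x 1 := by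
  have h0 := (mem_ocube.1 hx) 0
  have h1 := (mem_ocube.1 hx) 1
  nlinarith [h0.1, h0.2, h1.1, h1.2]

lemma phi_mem {x : Fin 3 → ℝ} (hx : x ∈ ocube) : phi x ∈ ocube := by
  have h0 := (mem_ocube.1 hx) 0
  have h1 := (mem_ocube.1 hx) 1
  have h2 := (mem_ocube.1 hx) 2
  have hP := hP_pos hx
  rw [mem_ocube]
  intro i
  fin_cases i
  · exact h2
  · show (0:ℝ) < (1 - x 1) / (1 - x 0 * x 1 * x 2) ∧
      (1 - x 1) / (1 - x 0 * x 1 * x 2) < 1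
    constructor
    · exact div_pos (by linarith [h1.2]) hP
    · rw [div_lt_one hP]
      have h02 : x 0 * x 2 < 1 := by nlinarith [h0.1, h0.2, h2.1, h2.2]
      nlinarith [h02, h1.1, mul_pos h0.1 h2.1]
  · exact h0

lemma phi_phi {x : Fin 3 → ℝ} (hx : x ∈ ocube) : phi (phi x) = x := by
  have hP := hP_pos hx
  have hPne : (1 - x 0 * x 1 * x 2) ≠ 0 := ne_of_gt hP
  have hQne : (1 - x 0 * x 2) ≠ 0 := ne_of_gt (hQ_pos hx)
  funext i
  fin_cases i
  · rfl
  · show (1 - (1 - x 1) / (1 - x 0 * x 1 * x 2)) /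
      (1 - x 2 * ((1 - x 1) / (1 - x 0 * x 1 * x 2)) * x 0) = x 1
    have e1 : 1 - x 2 * ((1 - x 1) / (1 - x 0 * x 1 * x 2)) * x 0
        = (1 - x 0 * x 2) / (1 - x 0 * x 1 * x 2) := by
      rw [mul_div_assoc', div_mul_eq_mul_div, one_sub_div hPne]
      congr 1
      ring
    rw [e1, div_eq_iff (div_ne_zero hQne hPne)]
    rw [one_sub_div hPne, mul_div_assoc']
    congr 1
    ring
  · rfl

lemma phi_image : phi '' ocube = ocube := by
  apply Set.Subset.antisymm
  · rintro _ ⟨x, hx, rfl⟩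
    exact phi_mem hx
  · intro x hx
    exact ⟨phi x, phi_mem hx, phi_phi hx⟩

lemma phi_injOn : Set.InjOn phi ocube := by
  intro a ha b hb h
  rw [← phi_phi ha, ← phi_phi hb, h]

set_option maxHeartbeats 1000000 in
lemma hasFDerivAt_phi {x : Fin 3 → ℝ} (hx : x ∈ ocube) : HasFDerivAt phi (D3 x) x := by
  have hP := hP_pos hx
  have hPne : (1 - x 0 * x 1 * x 2) ≠ 0 := ne_of_gt hP
  apply hasFDerivAt_pi''
  intro i
  fin_cases i
  · exact (hasFDerivAt_apply (𝕜 := ℝ) (2 : Fin 3) x).congr_fderiv <| by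
      ext v
      simp only [D3, ContinuousLinearMap.comp_apply, LinearMap.coe_toContinuousLinearMap']
      rw [Matrix.toLin'_apply]
      simp [D3, M3, Matrix.toLin'_apply, Matrix.mulVec, dotProduct,
        Fin.sum_univ_three]
  · -- middle component: quotient rule
    have h0 := hasFDerivAt_apply (𝕜 := ℝ) (0 : Fin 3) x
    have h1 := hasFDerivAt_apply (𝕜 := ℝ) (1 : Fin 3) x
    have h2 := hasFDerivAt_apply (𝕜 := ℝ) (2 : Fin 3) x
    have hnum : HasFDerivAt (fun x' : Fin 3 → ℝ => (1:ℝ) - x' 1)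
        ((0 : (Fin 3 → ℝ) →L[ℝ] ℝ) - ContinuousLinearMap.proj (1 : Fin 3)) x := (hasFDerivAt_const (1:ℝ) x).sub h1
    have hd01 : HasFDerivAt (fun x' : Fin 3 → ℝ => x' 0 * x' 1)
        (x 0 • ContinuousLinearMap.proj (1 : Fin 3) + x 1 • ContinuousLinearMap.proj (0 : Fin 3)) x := h0.mul h1
    have hd012 : HasFDerivAt (fun x' : Fin 3 → ℝ => x' 0 * x' 1 * x' 2)
        ((x 0 * x 1) • ContinuousLinearMap.proj (2 : Fin 3) +
          x 2 • (x 0 • ContinuousLinearMap.proj (1 : Fin 3) + x 1 • ContinuousLinearMap.proj (0 : Fin 3))) x :=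
      hd01.mul h2
    have hden : HasFDerivAt (fun x' : Fin 3 → ℝ => (1:ℝ) - x' 0 * x' 1 * x' 2)
        ((0 : (Fin 3 → ℝ) →L[ℝ] ℝ) - ((x 0 * x 1) • ContinuousLinearMap.proj (2 : Fin 3) +
          x 2 • (x 0 • ContinuousLinearMap.proj (1 : Fin 3) + x 1 • ContinuousLinearMap.proj (0 : Fin 3)))) x :=
      (hasFDerivAt_const (1:ℝ) x).sub hd012
    have hinv := (hasDerivAt_inv hPne).comp_hasFDerivAt x hden
    have hdiv := hnum.mul hinv
    exact hdiv.congr_fderiv <| by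
      ext v
      simp only [D3, ContinuousLinearMap.comp_apply, LinearMap.coe_toContinuousLinearMap']
      rw [Matrix.toLin'_apply]
      simp [D3, M3, Matrix.toLin'_apply, Matrix.mulVec, dotProduct,
        Fin.sum_univ_three, smul_eq_mul]
      simp only [div_eq_mul_inv]
      rw [show (1 - x 0 * x 1 * x 2)⁻¹ = (1 - x 0 * x 1 * x 2) * ((1 - x 0 * x 1 * x 2) ^ 2)⁻¹ by
        rw [pow_two, mul_inv, ← mul_assoc, mul_inv_cancel₀ hPne, one_mul]]
      ring
  · exact (hasFDerivAt_apply (𝕜 := ℝ) (0 : Fin 3) x).congr_fderiv <| by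
      ext v
      simp only [D3, ContinuousLinearMap.comp_apply, LinearMap.coe_toContinuousLinearMap']
      rw [Matrix.toLin'_apply]
      simp [D3, M3, Matrix.toLin'_apply, Matrix.mulVec, dotProduct,
        Fin.sum_univ_three]

lemma det_D3 (x : Fin 3 → ℝ) :
    (D3 x).det = (1 - x 0 * x 2) / (1 - x 0 * x 1 * x 2) ^ 2 := by
  have : (D3 x).det = (M3 x).det := by
    rw [D3]
    rw [ContinuousLinearMap.det]
    rw [LinearMap.coe_toContinuousLinearMap]
    exact LinearMap.det_toLin' (M3 x)
  rw [this, Matrix.det_fin_three]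
  simp [M3]
  ring

set_option maxHeartbeats 1000000 in
lemma key (N : ℕ) {x : Fin 3 → ℝ} (hx : x ∈ ocube) :
    ENNReal.ofReal |(D3 x).det| * ENNReal.ofReal
      (phi x 0 ^ N * (1 - phi x 0) ^ N * phi x 1 ^ N * (1 - phi x 1) ^ N *
        phi x 2 ^ N * (1 - phi x 2) ^ N /
        (1 - phi x 2 * (1 - phi x 1 * (1 - phi x 0))) ^ (N + 1)) =
    ENNReal.ofReal
      (x 0 ^ N * (1 - x 0) ^ N * x 1 ^ N * (1 - x 1) ^ N * x 2 ^ N * (1 - x 2) ^ N /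
        ((1 - x 0 * x 1) ^ (N + 1) * (1 - x 0 * x 1 * x 2) ^ (N + 1))) := by
  have h0 := (mem_ocube.1 hx) 0
  have h1 := (mem_ocube.1 hx) 1
  have h2 := (mem_ocube.1 hx) 2
  have hP := hP_pos hx
  have hPne : (1 - x 0 * x 1 * x 2) ≠ 0 := ne_of_gt hP
  have hQ := hQ_pos hx
  have hQne : (1 - x 0 * x 2) ≠ 0 := ne_of_gt hQ
  have hXY := hXY_pos hx
  have hXYne : (1 - x 0 * x 1) ≠ 0 := ne_of_gt hXY
  rw [det_D3, abs_of_pos (by positivity)]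
  rw [phi0, phi1, phi2]
  rw [← ENNReal.ofReal_mul (by positivity)]
  congr 1
  have hy1 : (1:ℝ) - (1 - x 1) / (1 - x 0 * x 1 * x 2)
      = x 1 * (1 - x 0 * x 2) / (1 - x 0 * x 1 * x 2) := by
    rw [one_sub_div hPne]
    congr 1
    ring
  have hD : (1:ℝ) - x 0 * (1 - (1 - x 1) / (1 - x 0 * x 1 * x 2) * (1 - x 2))
      = (1 - x 0 * x 1) * (1 - x 0 * x 2) / (1 - x 0 * x 1 * x 2) := by
    field_simp
    ring
  rw [hy1, hD]
  simp only [div_pow, mul_pow]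
  field_simp
  have hP' : (1 - x 0 * x 2 * x 1) ≠ 0 := by
    rw [show x 0 * x 2 * x 1 = x 0 * x 1 * x 2 by ring]; exact hPne
  rw [div_eq_div_iff (mul_ne_zero (pow_ne_zero _ hP') (pow_ne_zero _ (pow_ne_zero _ hP')))
    (pow_ne_zero _ hP')]
  ring

end BeukersSorokinAux

open BeukersSorokinAux
theorem stmt2 (N : ℕ) :
    (∫⁻ x in cube 3, ENNReal.ofReal
      (x 0 ^ N * (1 - x 0) ^ N * x 1 ^ N * (1 - x 1) ^ N * x 2 ^ N * (1 - x 2) ^ N /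
        (1 - x 2 * (1 - x 1 * (1 - x 0))) ^ (N + 1))) =
    ∫⁻ x in cube 3, ENNReal.ofReal
      (x 0 ^ N * (1 - x 0) ^ N * x 1 ^ N * (1 - x 1) ^ N * x 2 ^ N * (1 - x 2) ^ N /
        ((1 - x 0 * x 1) ^ (N + 1) * (1 - x 0 * x 1 * x 2) ^ (N + 1))) := by
  have hae : ocube =ᵐ[(volume : Measure (Fin 3 → ℝ))] cube 3 := by
    have h := MeasureTheory.Measure.pi_Ioo_ae_eq_pi_Icc
      (μ := fun _ : Fin 3 => (volume : Measure ℝ)) (s := Set.univ)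
      (f := fun _ => (0:ℝ)) (g := fun _ => (1:ℝ))
    rw [show (volume : Measure (Fin 3 → ℝ)) = Measure.pi fun _ => volume from rfl]
    exact h
  have hs : MeasurableSet ocube := MeasurableSet.univ_pi fun _ => measurableSet_Ioo
  rw [← setLIntegral_congr hae, ← setLIntegral_congr hae]
  have hf' : ∀ x ∈ ocube, HasFDerivWithinAt phi (D3 x) ocube x :=
    fun x hx => (hasFDerivAt_phi hx).hasFDerivWithinAt
  calc
    (∫⁻ x in ocube, ENNReal.ofReal
      (x 0 ^ N * (1 - x 0) ^ N * x 1 ^ N * (1 - x 1) ^ N * x 2 ^ N * (1 - x 2) ^ N /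
        (1 - x 2 * (1 - x 1 * (1 - x 0))) ^ (N + 1)))
      = ∫⁻ x in phi '' ocube, ENNReal.ofReal
      (x 0 ^ N * (1 - x 0) ^ N * x 1 ^ N * (1 - x 1) ^ N * x 2 ^ N * (1 - x 2) ^ N /
        (1 - x 2 * (1 - x 1 * (1 - x 0))) ^ (N + 1)) := by rw [phi_image]
    _ = ∫⁻ x in ocube, ENNReal.ofReal |(D3 x).det| * ENNReal.ofReal
      (phi x 0 ^ N * (1 - phi x 0) ^ N * phi x 1 ^ N * (1 - phi x 1) ^ N *
        phi x 2 ^ N * (1 - phi x 2) ^ N /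
        (1 - phi x 2 * (1 - phi x 1 * (1 - phi x 0))) ^ (N + 1)) :=
      lintegral_image_eq_lintegral_abs_det_fderiv_mul volume hs hf' phi_injOn _
    _ = ∫⁻ x in ocube, ENNReal.ofReal
      (x 0 ^ N * (1 - x 0) ^ N * x 1 ^ N * (1 - x 1) ^ N * x 2 ^ N * (1 - x 2) ^ N /
        ((1 - x 0 * x 1) ^ (N + 1) * (1 - x 0 * x 1 * x 2) ^ (N + 1))) :=
      setLIntegral_congr_fun hs (fun x hx => key N hx)

end
end

section
/- For every odd integer n ≥ 3, the Vasilyev integral V_n(0) equals the multiple series Σ_{l_1 ≥ l_2 ≥ ⋯ ≥ l_{(n−1)/2} ≥ l_{(n+1)/2} ≥ 1} 1/(l_1^2 l_2^2 ⋯ l_{(n−1)/2}^2 l_{(n+1)/2}). -/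
/-!
Write `n = 2q + 1` and integrate the variables out from the last one, using
`δ_{k+1} = 1 - x_{k+1} δ_k`. Integrating `x_{2q+1}` expands `1/δ_{2q+1}` into
`∑_m δ_{2q}^m / (m+1)`. For the moments `M_k(m) = ∫ δ_k^m`, integrating `x_{k+2}` gives
`∫₀¹ (1 - y t)^m dy = (m+1)⁻¹ ∑_{j ≤ m} (1 - t)^j` with `1 - δ_{k+1} = x_{k+1} δ_k`, and then
integrating `x_{k+1}` gives `M_{k+2}(m) = (m+1)⁻¹ ∑_{j ≤ m} M_k(j) / (j+1)`.
So `c_q(m+1) = M_{2q}(m) / (m+1)` satisfies `c_0(a) = 1/a` and `c_{q+1}(a) = a⁻² ∑_{b ≤ a} c_q(b)`.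
This is also the recursion for the sum over chains `a = l_1 ≥ l_2 ≥ ⋯ ≥ l_{q+1} ≥ 1` of
`1/(l_1² ⋯ l_q² l_{q+1})`, and summing over `a` gives the series.
-/

open MeasureTheory Finset
open scoped ENNReal

noncomputable section

/-- `δ_k(x) = 1 - x_k δ_{k-1}(x)`, with `δ_0 = 1`. -/
def delta {n : ℕ} (x : Fin n → ℝ) : ℕ → ℝ
  | 0 => 1
  | k + 1 => 1 - ent x (k + 1) * delta x k

/-- The Vasilyev integral `V_n(N)`. -/
def Vint (n : ℕ) (N : ℕ) : ℝ≥0∞ :=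
  ∫⁻ x in cube n, ENNReal.ofReal
    ((∏ k ∈ Icc 1 n, ent x k ^ N * (1 - ent x k) ^ N) / delta x n ^ (N + 1))


theorem ofReal_inv_natCast_add_one (m : ℕ) :
    ENNReal.ofReal ((m + 1 : ℝ)⁻¹) = ((m : ℝ≥0∞) + 1)⁻¹ := by
  rw [ENNReal.ofReal_inv_of_pos (by positivity)]
  exact_mod_cast congrArg Inv.inv (ENNReal.ofReal_natCast (m + 1))

theorem lintegral_Icc_ofReal_pow (m : ℕ) :
    ∫⁻ y in Set.Icc (0 : ℝ) 1, ENNReal.ofReal y ^ m = ((m : ℝ≥0∞) + 1)⁻¹ := by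
  have hpow : ∀ y ∈ Set.Icc (0 : ℝ) 1, ENNReal.ofReal y ^ m = ENNReal.ofReal (y ^ m) :=
    fun y hy => (ENNReal.ofReal_pow hy.1 m).symm
  rw [setLIntegral_congr_fun measurableSet_Icc hpow,
    ← ofReal_integral_eq_lintegral_ofReal (continuous_pow m).integrableOn_Icc
      ((ae_restrict_mem measurableSet_Icc).mono fun y hy => pow_nonneg hy.1 m),
    integral_Icc_eq_integral_Ioc, ← intervalIntegral.integral_of_le zero_le_one, integral_pow]
  simpa using ofReal_inv_natCast_add_one m

theorem lintegral_Icc_ofReal_mul_pow (j : ℕ) (s : ℝ) :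
    ∫⁻ z in Set.Icc (0 : ℝ) 1, ENNReal.ofReal ((z * s) ^ j) =
      ((j : ℝ≥0∞) + 1)⁻¹ * ENNReal.ofReal (s ^ j) := by
  have hsplit : ∀ z ∈ Set.Icc (0 : ℝ) 1,
      ENNReal.ofReal ((z * s) ^ j) = ENNReal.ofReal z ^ j * ENNReal.ofReal (s ^ j) :=
    fun z hz => by rw [mul_pow, ENNReal.ofReal_mul (pow_nonneg hz.1 j), ENNReal.ofReal_pow hz.1]
  rw [setLIntegral_congr_fun measurableSet_Icc hsplit,
    lintegral_mul_const _ (ENNReal.measurable_ofReal.pow_const j), lintegral_Icc_ofReal_pow]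

theorem lintegral_Icc_ofReal_inv_one_sub_mul {t : ℝ} (ht : t ∈ Set.Icc (0 : ℝ) 1) :
    ∫⁻ y in Set.Icc (0 : ℝ) 1, ENNReal.ofReal (1 - y * t)⁻¹ =
      ∑' m : ℕ, ((m : ℝ≥0∞) + 1)⁻¹ * ENNReal.ofReal (t ^ m) := by
  have hgeom : ∀ y ∈ Set.Ico (0 : ℝ) 1,
      ENNReal.ofReal (1 - y * t)⁻¹ =
        ∑' m : ℕ, ENNReal.ofReal y ^ m * ENNReal.ofReal (t ^ m) := by
    intro y ⟨hy0, hy1⟩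
    have hyt : y * t < 1 := (mul_le_of_le_one_right hy0 ht.2).trans_lt hy1
    rw [ENNReal.ofReal_inv_of_pos (by linarith), ENNReal.ofReal_sub 1 (mul_nonneg hy0 ht.1),
      ENNReal.ofReal_one, ← ENNReal.tsum_geometric]
    simp_rw [ENNReal.ofReal_mul hy0, mul_pow, ENNReal.ofReal_pow ht.1]
  -- The geometric expansion may fail at `y = 1`, a null set.
  rw [← Measure.restrict_congr_set Ico_ae_eq_Icc, setLIntegral_congr_fun measurableSet_Ico hgeom,
    lintegral_tsum fun m => ((ENNReal.measurable_ofReal.pow_const m).mul_const _).aemeasurable,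
    Measure.restrict_congr_set Ico_ae_eq_Icc]
  congr 1 with m
  rw [lintegral_mul_const _ (ENNReal.measurable_ofReal.pow_const m), lintegral_Icc_ofReal_pow]

theorem integral_Icc_one_sub_mul_pow (m : ℕ) (t : ℝ) :
    ∫ y in Set.Icc (0 : ℝ) 1, (1 - y * t) ^ m =
      (m + 1 : ℝ)⁻¹ * ∑ j ∈ range (m + 1), (1 - t) ^ j := by
  rw [integral_Icc_eq_integral_Ioc, ← intervalIntegral.integral_of_le zero_le_one]
  rcases eq_or_ne t 0 with rfl | ht
  · simp [inv_mul_cancel₀ (by positivity : (m + 1 : ℝ) ≠ 0)]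
  have hderiv : ∀ y ∈ Set.uIcc (0 : ℝ) 1,
      HasDerivAt (fun y => -(1 - y * t) ^ (m + 1) / ((m + 1) * t)) ((1 - y * t) ^ m) y := by
    intro y _
    refine ((((hasDerivAt_id' y).mul_const t).const_sub 1).fun_pow (m + 1)).neg.div_const
      ((m + 1) * t) |>.congr_deriv ?_
    field_simp
    push_cast
    ring
  rw [intervalIntegral.integral_eq_sub_of_hasDerivAt hderiv
      ((by fun_prop : Continuous fun y : ℝ => (1 - y * t) ^ m).intervalIntegrable 0 1),
    geom_sum_eq (by simpa using ht) (m + 1), sub_sub_cancel_left]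
  field_simp
  ring

theorem lintegral_Icc_ofReal_one_sub_mul_pow (m : ℕ) {t : ℝ} (ht : t ∈ Set.Icc (0 : ℝ) 1) :
    ∫⁻ y in Set.Icc (0 : ℝ) 1, ENNReal.ofReal ((1 - y * t) ^ m) =
      ((m : ℝ≥0∞) + 1)⁻¹ * ∑ j ∈ range (m + 1), ENNReal.ofReal ((1 - t) ^ j) := by
  rw [← ofReal_integral_eq_lintegral_ofReal
      (by fun_prop : Continuous fun y : ℝ => (1 - y * t) ^ m).integrableOn_Icc
      ((ae_restrict_mem measurableSet_Icc).mono fun y hy =>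
        pow_nonneg (by nlinarith [hy.1, hy.2, ht.1, ht.2]) m),
    integral_Icc_one_sub_mul_pow, ENNReal.ofReal_mul (by positivity), ofReal_inv_natCast_add_one,
    ENNReal.ofReal_sum_of_nonneg fun j _ => pow_nonneg (by linarith [ht.2]) j]

theorem lintegral_pi_fin_succ_eq_lintegral_snoc {α : Type*} [MeasurableSpace α] (μ : Measure α)
    [SigmaFinite μ] {n : ℕ} {f : (Fin (n + 1) → α) → ℝ≥0∞} (hf : Measurable f) :
    ∫⁻ x, f x ∂Measure.pi (fun _ => μ) =
      ∫⁻ x, ∫⁻ y, f (Fin.snoc x y) ∂μ ∂Measure.pi (fun _ => μ) := by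
  set e := MeasurableEquiv.piFinSuccAbove (fun _ : Fin (n + 1) => α) (Fin.last n)
  have he : ∀ p : α × (Fin n → α), e.symm p = Fin.snoc p.2 p.1 := fun p => by
    rw [MeasurableEquiv.piFinSuccAbove_symm_apply]
    exact Fin.insertNth_last' _ _
  have hm : Measurable fun p : α × (Fin n → α) => f (Fin.snoc p.2 p.1) := by
    simpa only [Function.comp_def, he] using hf.comp e.symm.measurable
  have hmp : MeasurePreserving e _ _ := measurePreserving_piFinSuccAbove (fun _ => μ) (Fin.last n)
  rw [← hmp.symm.lintegral_comp hf]
  simp only [he]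
  exact lintegral_prod_symm _ hm.aemeasurable

theorem volume_restrict_cube (n : ℕ) :
    volume.restrict (cube n) = Measure.pi fun _ => volume.restrict (Set.Icc (0 : ℝ) 1) := by
  rw [cube, volume_pi, Measure.restrict_pi_pi]

theorem measurableSet_cube (n : ℕ) : MeasurableSet (cube n) :=
  MeasurableSet.univ_pi fun _ => measurableSet_Icc

theorem setLIntegral_cube_succ {n : ℕ} {f : (Fin (n + 1) → ℝ) → ℝ≥0∞} (hf : Measurable f) :
    ∫⁻ x in cube (n + 1), f x = ∫⁻ x in cube n, ∫⁻ y in Set.Icc 0 1, f (Fin.snoc x y) := by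
  rw [volume_restrict_cube, volume_restrict_cube, lintegral_pi_fin_succ_eq_lintegral_snoc _ hf]

theorem measurable_ent {n : ℕ} (k : ℕ) : Measurable fun x : Fin n → ℝ => ent x k := by
  unfold ent
  split
  · exact measurable_pi_apply _
  · exact measurable_const

theorem measurable_delta {n : ℕ} : ∀ k : ℕ, Measurable fun x : Fin n → ℝ => delta x k
  | 0 => measurable_const
  | k + 1 => measurable_const.sub ((measurable_ent (k + 1)).mul (measurable_delta k))

theorem ent_mem_Icc {n : ℕ} {x : Fin n → ℝ} (hx : x ∈ cube n) (k : ℕ) :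
    ent x k ∈ Set.Icc (0 : ℝ) 1 := by
  unfold ent
  split
  · exact hx _ (Set.mem_univ _)
  · exact ⟨le_rfl, zero_le_one⟩

theorem delta_mem_Icc {n : ℕ} {x : Fin n → ℝ} (hx : x ∈ cube n) :
    ∀ k : ℕ, delta x k ∈ Set.Icc (0 : ℝ) 1
  | 0 => ⟨zero_le_one, le_rfl⟩
  | k + 1 => by
    obtain ⟨ha, ha'⟩ := ent_mem_Icc hx (k + 1)
    obtain ⟨hd, hd'⟩ := delta_mem_Icc hx k
    exact ⟨by dsimp only [delta]; nlinarith, by dsimp only [delta]; nlinarith⟩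

theorem ent_snoc_of_le {n : ℕ} (x : Fin n → ℝ) (y : ℝ) {k : ℕ} (hk1 : 1 ≤ k) (hk : k ≤ n) :
    ent (Fin.snoc x y : Fin (n + 1) → ℝ) k = ent x k := by
  have hk' : k - 1 < n := by omega
  rw [ent, ent, dif_pos (by omega), dif_pos hk']
  exact Fin.snoc_castSucc (i := ⟨k - 1, hk'⟩) ..

theorem ent_snoc_last {n : ℕ} (x : Fin n → ℝ) (y : ℝ) :
    ent (Fin.snoc x y : Fin (n + 1) → ℝ) (n + 1) = y := by
  rw [ent, dif_pos (by omega)]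
  exact Fin.snoc_last (α := fun _ => ℝ) ..

theorem delta_snoc_of_le {n : ℕ} (x : Fin n → ℝ) (y : ℝ) :
    ∀ {k : ℕ}, k ≤ n → delta (Fin.snoc x y : Fin (n + 1) → ℝ) k = delta x k
  | 0, _ => rfl
  | k + 1, hk => by
    rw [delta, delta, ent_snoc_of_le x y (Nat.le_add_left 1 k) hk,
      delta_snoc_of_le x y (by omega)]

theorem setLIntegral_cube_succ_comp_delta {n : ℕ} {F : ℝ → ℝ → ℝ≥0∞}
    (hF : Measurable (Function.uncurry F)) {G : ℝ → ℝ≥0∞}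
    (hFG : ∀ t ∈ Set.Icc (0 : ℝ) 1, ∫⁻ y in Set.Icc 0 1, F y t = G t) :
    ∫⁻ x in cube (n + 1), F (ent x (n + 1)) (delta x n) = ∫⁻ x in cube n, G (delta x n) := by
  rw [setLIntegral_cube_succ (f := fun x => F (ent x (n + 1)) (delta x n))
    (hF.comp ((measurable_ent _).prodMk (measurable_delta _)))]
  simp only [ent_snoc_last, delta_snoc_of_le _ _ le_rfl]
  exact setLIntegral_congr_fun (measurableSet_cube n) fun x hx => hFG _ (delta_mem_Icc hx n)

def deltaMoment (n m : ℕ) : ℝ≥0∞ := ∫⁻ x in cube n, ENNReal.ofReal (delta x n ^ m)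

theorem measurable_ofReal_delta_pow {n : ℕ} (k m : ℕ) :
    Measurable fun x : Fin n → ℝ => ENNReal.ofReal (delta x k ^ m) :=
  ((measurable_delta k).pow_const m).ennreal_ofReal

theorem deltaMoment_zero_left (m : ℕ) : deltaMoment 0 m = 1 := by
  simp [deltaMoment, delta, cube, Real.volume_Icc_pi]

theorem Vint_succ_zero (n : ℕ) :
    Vint (n + 1) 0 = ∑' m : ℕ, ((m : ℝ≥0∞) + 1)⁻¹ * deltaMoment n m := by
  have hint : Vint (n + 1) 0 =
      ∫⁻ x in cube (n + 1), ENNReal.ofReal (1 - ent x (n + 1) * delta x n)⁻¹ := by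
    simp [Vint, delta]
  rw [hint, setLIntegral_cube_succ_comp_delta (by fun_prop)
      fun t ht => lintegral_Icc_ofReal_inv_one_sub_mul ht,
    lintegral_tsum fun m => ((measurable_ofReal_delta_pow n m).const_mul _).aemeasurable]
  simp_rw [lintegral_const_mul _ (measurable_ofReal_delta_pow n _), deltaMoment]

theorem deltaMoment_add_two (n m : ℕ) :
    deltaMoment (n + 2) m =
      ((m : ℝ≥0∞) + 1)⁻¹ * ∑ j ∈ range (m + 1), ((j : ℝ≥0∞) + 1)⁻¹ * deltaMoment n j := by
  have hmeas : ∀ j : ℕ, Measurable fun x : Fin (n + 1) → ℝ =>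
      ENNReal.ofReal ((ent x (n + 1) * delta x n) ^ j) := fun j =>
    (((measurable_ent _).mul (measurable_delta _)).pow_const j).ennreal_ofReal
  have hlast : ∀ j : ℕ,
      ∫⁻ x in cube (n + 1), ENNReal.ofReal ((ent x (n + 1) * delta x n) ^ j) =
        ((j : ℝ≥0∞) + 1)⁻¹ * deltaMoment n j := fun j => by
    rw [setLIntegral_cube_succ_comp_delta (by fun_prop)
        fun s _ => lintegral_Icc_ofReal_mul_pow j s,
      lintegral_const_mul _ (measurable_ofReal_delta_pow n j), deltaMoment]
  calc deltaMoment (n + 2) m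
      = ∫⁻ x in cube (n + 1 + 1),
          ENNReal.ofReal ((1 - ent x (n + 1 + 1) * delta x (n + 1)) ^ m) := rfl
    _ = ∫⁻ x in cube (n + 1), ((m : ℝ≥0∞) + 1)⁻¹ *
          ∑ j ∈ range (m + 1), ENNReal.ofReal ((ent x (n + 1) * delta x n) ^ j) := by
      rw [setLIntegral_cube_succ_comp_delta (by fun_prop)
        fun t ht => lintegral_Icc_ofReal_one_sub_mul_pow m ht]
      simp only [delta, sub_sub_cancel]
    _ = _ := by
      rw [lintegral_const_mul _ (Finset.measurable_sum _ fun j _ => hmeas j),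
        lintegral_finsetSum _ fun j _ => hmeas j]
      simp_rw [hlast]

def chains (q : ℕ) : Set (Fin (q + 1) → ℕ) := {l | Antitone l ∧ ∀ i, 1 ≤ l i}

def chainWeight (q : ℕ) (l : Fin (q + 1) → ℕ) : ℝ≥0∞ :=
  ∏ i, ((l i : ℝ≥0∞) ^ (if i = Fin.last q then 1 else 2))⁻¹

def chainSum (q a : ℕ) : ℝ≥0∞ :=
  ∑' l : Fin (q + 1) → ℕ, if l 0 = a then (chains q).indicator (chainWeight q) l else 0

theorem cons_mem_chains {q a : ℕ} {l : Fin (q + 1) → ℕ} :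
    (Fin.cons a l : Fin (q + 2) → ℕ) ∈ chains (q + 1) ↔ l ∈ chains q ∧ l 0 ≤ a := by
  have hanti : Antitone (Fin.cons a l : Fin (q + 2) → ℕ) ↔ l 0 ≤ a ∧ Antitone l :=
    antitone_vecCons
  change (Antitone _ ∧ ∀ i, 1 ≤ (Fin.cons a l : Fin (q + 2) → ℕ) i) ↔
    (Antitone l ∧ ∀ i, 1 ≤ l i) ∧ l 0 ≤ a
  rw [hanti, Fin.forall_fin_succ]
  simp only [Fin.cons_zero, Fin.cons_succ]
  constructor
  · rintro ⟨⟨hla, hl⟩, -, hpos⟩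
    exact ⟨⟨hl, hpos⟩, hla⟩
  · rintro ⟨⟨hl, hpos⟩, hla⟩
    exact ⟨⟨hla, hl⟩, (hpos 0).trans hla, hpos⟩

theorem chainWeight_cons (q a : ℕ) (l : Fin (q + 1) → ℕ) :
    chainWeight (q + 1) (Fin.cons a l) = ((a : ℝ≥0∞) ^ 2)⁻¹ * chainWeight q l := by
  simp only [chainWeight, Fin.prod_univ_succ, Fin.cons_zero, Fin.cons_succ, ← Fin.succ_last,
    Fin.succ_inj]
  rw [if_neg (Fin.succ_ne_zero _).symm]

theorem indicator_chains_cons (q a : ℕ) (l : Fin (q + 1) → ℕ) :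
    (chains (q + 1)).indicator (chainWeight (q + 1)) (Fin.cons a l) =
      ((a : ℝ≥0∞) ^ 2)⁻¹ * if l 0 ≤ a then (chains q).indicator (chainWeight q) l else 0 := by
  by_cases hl : l ∈ chains q ∧ l 0 ≤ a
  · rw [Set.indicator_of_mem (cons_mem_chains.2 hl), if_pos hl.2, Set.indicator_of_mem hl.1,
      chainWeight_cons]
  · rw [Set.indicator_of_notMem (mt cons_mem_chains.1 hl)]
    by_cases hla : l 0 ≤ a
    · rw [if_pos hla, Set.indicator_of_notMem fun h => hl ⟨h, hla⟩, mul_zero]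
    · rw [if_neg hla, mul_zero]

theorem chainSum_zero_right (q : ℕ) : chainSum q 0 = 0 := by
  refine ENNReal.tsum_eq_zero.2 fun l => ?_
  split_ifs with hl
  · exact Set.indicator_of_notMem (fun h => by simpa [hl] using h.2 0) _
  · rfl

theorem chainSum_zero_left (m : ℕ) : chainSum 0 (m + 1) = ((m : ℝ≥0∞) + 1)⁻¹ := by
  rw [chainSum, ← (Equiv.funUnique (Fin 1) ℕ).symm.tsum_eq]
  simp only [Equiv.funUnique_symm_apply, uniqueElim_const]
  have hmem : (uniqueElim (m + 1) : Fin 1 → ℕ) ∈ chains 0 :=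
    ⟨Subsingleton.antitone (α := Fin 1) _, fun _ => Nat.le_add_left 1 m⟩
  rw [tsum_ite_eq, Set.indicator_of_mem hmem]
  simp [chainWeight]

-- For `a = 0` both sides vanish, the right one as `⊤ * 0 = 0`.
theorem chainSum_succ_left (q a : ℕ) :
    chainSum (q + 1) a = ((a : ℝ≥0∞) ^ 2)⁻¹ * ∑ b ∈ range (a + 1), chainSum q b := by
  have hsplit : ∀ l : Fin (q + 1) → ℕ,
      (if l 0 ≤ a then (chains q).indicator (chainWeight q) l else 0) =
        ∑ b ∈ range (a + 1), if l 0 = b then (chains q).indicator (chainWeight q) l else 0 :=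
    fun l => by simp only [Finset.sum_ite_eq, Finset.mem_range, Nat.lt_succ_iff]
  calc chainSum (q + 1) a
      = ∑' l : Fin (q + 1) → ℕ,
          (chains (q + 1)).indicator (chainWeight (q + 1)) (Fin.cons a l) := by
        rw [chainSum, ← (Fin.consEquiv fun _ => ℕ).tsum_eq, ENNReal.tsum_prod', ENNReal.tsum_comm]
        simp only [Fin.consEquiv_apply, Fin.cons_zero, tsum_ite_eq]
        rfl
    _ = ((a : ℝ≥0∞) ^ 2)⁻¹ * ∑ b ∈ range (a + 1), chainSum q b := by
        simp_rw [indicator_chains_cons, ENNReal.tsum_mul_left, hsplit, chainSum]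
        rw [Summable.tsum_finsetSum fun _ _ => ENNReal.summable]

theorem tsum_chainSum (q : ℕ) : ∑' a, chainSum q a = ∑' l : chains q, chainWeight q l := by
  rw [_root_.tsum_subtype]
  simp only [chainSum]
  rw [ENNReal.tsum_comm]
  exact tsum_congr fun l => by simp only [@eq_comm ℕ (l 0), tsum_ite_eq]

theorem inv_mul_deltaMoment_eq_chainSum (q m : ℕ) :
    ((m : ℝ≥0∞) + 1)⁻¹ * deltaMoment (2 * q) m = chainSum q (m + 1) := by
  induction q generalizing m with
  | zero => rw [Nat.mul_zero, deltaMoment_zero_left, mul_one, chainSum_zero_left]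
  | succ q ih =>
    rw [Nat.mul_succ, deltaMoment_add_two, chainSum_succ_left,
      Finset.sum_range_succ' (chainSum q), chainSum_zero_right, add_zero, ← mul_assoc,
      ← ENNReal.mul_inv (by simp) (by simp), ← sq]
    simp_rw [ih]
    push_cast
    rfl

theorem stmt6_general (n : ℕ) (hodd : Odd n) :
    Vint n 0 =
      ∑' l : {l : Fin ((n + 1) / 2) → ℕ // (∀ i j, i ≤ j → l j ≤ l i) ∧ ∀ i, 1 ≤ l i},
        ∏ i, (1 : ℝ≥0∞) / ((l.1 i : ℝ≥0∞)) ^ (if (i : ℕ) + 1 = (n + 1) / 2 then 1 else 2) := by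
  obtain ⟨q, rfl⟩ := hodd
  rw [show (2 * q + 1 + 1) / 2 = q + 1 by omega, Vint_succ_zero]
  calc ∑' m : ℕ, ((m : ℝ≥0∞) + 1)⁻¹ * deltaMoment (2 * q) m
      = ∑' m : ℕ, chainSum q (m + 1) := tsum_congr (inv_mul_deltaMoment_eq_chainSum q)
    _ = ∑' a : ℕ, chainSum q a := Nat.succ_injective.tsum_eq fun
      | 0, ha => absurd (chainSum_zero_right q) ha
      | a + 1, _ => ⟨a, rfl⟩
    _ = ∑' l : chains q, chainWeight q l := tsum_chainSum q
    _ = _ := tsum_congr fun l => by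
      simp [chainWeight, Fin.ext_iff]

theorem stmt6 (n : ℕ) (hn : 3 ≤ n) (hodd : Odd n) :
    Vint n 0 =
      ∑' l : {l : Fin ((n + 1) / 2) → ℕ // (∀ i j, i ≤ j → l j ≤ l i) ∧ ∀ i, 1 ≤ l i},
        ∏ i, (1 : ℝ≥0∞) / ((l.1 i : ℝ≥0∞)) ^ (if (i : ℕ) + 1 = (n + 1) / 2 then 1 else 2) :=
  stmt6_general n hodd

end
end

section
/- For every integer n ≥ 2 and every p ∈ ℤ^{3n−1}, L(p) = L(ψ(p)), where ψ is the automorphism of ℤ^{3n−1} sending p = (a_1,…,a_n,b_1,…,b_n,c_2,…,c_n) to p′ = (a′_1,…,a′_n,b′_1,…,b′_n,c′_2,…,c′_n) defined by a′_k = a_{n+1−k} for 1 ≤ k ≤ n; b′_k = b_{n+2−k} for 2 ≤ k ≤ n and b′_1 = a_{n−1} + b_n − c_n; c′_k = a_{n+2−k} + b_{n+2−k} + c_{n+1−k} − b_{n+1−k} − a_{n−k} for 2 ≤ k ≤ n−1; and c′_n = a_2 + b_2 − b_1. (The equality holds in [0,∞].) -/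
open MeasureTheory Finset
open scoped ENNReal

noncomputable section

/-- The integral `L(p)` for `p = (a_1,…,a_n,b_1,…,b_n,c_2,…,c_n)`. -/
def Lint (n : ℕ) (a b c : ℕ → ℤ) : ℝ≥0∞ :=
  ∫⁻ x in cube n, ENNReal.ofReal
    ((∏ k ∈ Icc 1 n, ent x k ^ a k * (1 - ent x k) ^ b k) /
      ((∏ k ∈ Icc 2 n, delta x k ^ c k) * delta x n))

/-!
The map `y ↦ x` with `x_k = (1 - δ_{n+1-k}(y)) / δ_{n+2-k}(y)` is an involution of the open
cube which reverses the sequence `δ_1, …, δ_n`: `δ_k(x) = δ_{n+1-k}(y)`. Under it `x_k`,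
`1 - x_k` and `δ_k(x)` are monomials in `y_j`, `1 - y_j` and `δ_j(y)`, so the integrand of `L(p)`
becomes, up to the Jacobian, an integrand of the same shape; comparing exponents (after taking
logarithms) gives `ψ(p)`. The Jacobian comes from `Φ(y) = (δ_1(y), …, δ_n(y))`: its derivative is
lower triangular with diagonal `-δ_0, …, -δ_{n-1}`, and `Φ` conjugates the involution to the
reversal of coordinates, so `|det| = ∏ δ_{k-1}(y) / ∏ δ_{k-1}(x) = δ_1(y) / δ_n(y)` by
telescoping.
-/

lemma LinearMap.det_eq_prod_of_lowerTriangular {R ι : Type*} [CommRing R] [Fintype ι]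
    [DecidableEq ι] [LinearOrder ι] (f : (ι → R) →ₗ[R] (ι → R))
    (h : ∀ i j, i < j → f (Pi.single j 1) i = 0) :
    LinearMap.det f = ∏ i, f (Pi.single i 1) i := by
  rw [← LinearMap.det_toMatrix', Matrix.det_of_isLowerTriangular]
  · simp [LinearMap.toMatrix'_apply]
  · intro i j hij
    simpa [LinearMap.toMatrix'_apply, Pi.single_apply] using h i j hij

lemma ContinuousLinearMap.det_comp {R M : Type*} [CommRing R] [TopologicalSpace M]
    [AddCommGroup M] [Module R M] (f g : M →L[R] M) : (f.comp g).det = f.det * g.det := by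
  simp only [det, toLinearMap_comp, LinearMap.det_comp]

lemma Finset.prod_range_mul_eq_prod_range_add_two_mul {M : Type*} [CommMonoid M] (f : ℕ → M)
    (n : ℕ) :
    (∏ i ∈ range n, f i) * (f n * f (n + 1)) = (∏ i ∈ range n, f (i + 2)) * (f 0 * f 1) := by
  induction n with
  | zero => simp
  | succ n ih =>
    rw [prod_range_succ, prod_range_succ]
    calc (∏ i ∈ range n, f i) * f n * (f (n + 1) * f (n + 2))
        = (∏ i ∈ range n, f i) * (f n * f (n + 1)) * f (n + 2) := by ac_rfl
      _ = _ := by rw [ih]; ac_rfl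

lemma Finset.sum_Icc_mul_reflect {R : Type*} [CommSemiring R] (G F : ℕ → R) {l n d : ℕ}
    (hd : n ≤ d) (hF : ∀ k ∈ Icc l n, d - k ∉ Icc 1 n → F (d - k) = 0) :
    ∑ k ∈ Icc l n, G k * F (d - k)
      = ∑ j ∈ Icc 1 n, (if d - j ∈ Icc l n then G (d - j) else 0) * F j := by
  refine sum_bij_ne_zero (fun k _ _ => d - k) (fun k hk hne => ?_)
    (fun k₁ hk₁ _ k₂ hk₂ _ h => ?_) (fun j hj hne => ?_) (fun k hk _ => ?_)
  · by_contra hout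
    exact hne (by rw [hF k hk hout, mul_zero])
  · simp only [mem_Icc] at hk₁ hk₂ h
    omega
  · have hmem : d - j ∈ Icc l n := by
      by_contra hout
      exact hne (by rw [if_neg hout, zero_mul])
    refine ⟨d - j, hmem, ?_, ?_⟩
    · rw [if_pos hmem] at hne
      simp only [mem_Icc] at hj hmem
      rwa [show d - (d - j) = j by omega]
    · simp only [mem_Icc] at hj
      omega
  · simp only [mem_Icc] at hk
    rw [show d - (d - k) = k by omega, if_pos (by simpa using hk)]

lemma Finset.sum_Icc_eq_sum_Icc_ite {M : Type*} [AddCommMonoid M] (f : ℕ → M) {l l' : ℕ}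
    (h : l ≤ l') (n : ℕ) :
    ∑ k ∈ Icc l' n, f k = ∑ k ∈ Icc l n, if l' ≤ k then f k else 0 := by
  rw [← sum_filter]
  congr 1
  ext k
  simp only [mem_Icc, mem_filter]
  omega

def openCube (n : ℕ) : Set (Fin n → ℝ) := Set.univ.pi fun _ => Set.Ioo (0:ℝ) 1

section Basic

variable {n : ℕ}

lemma isOpen_openCube : IsOpen (openCube n) :=
  isOpen_set_pi Set.finite_univ fun _ _ => isOpen_Ioo

lemma cube_ae_eq_openCube : cube n =ᵐ[volume] openCube n :=
  Measure.pi_Ioo_ae_eq_pi_Icc.symm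

lemma ent_of_le (x : Fin n → ℝ) {k : ℕ} (h1 : 1 ≤ k) (h : k ≤ n) :
    ent x k = x ⟨k - 1, by omega⟩ :=
  dif_pos (by omega)

lemma ent_succ (x : Fin n → ℝ) (i : Fin n) : ent x (i + 1) = x i :=
  dif_pos (by omega)

lemma ent_of_lt (x : Fin n → ℝ) {k : ℕ} (h : n < k) : ent x k = 0 :=
  dif_neg (by omega)

lemma delta_one (x : Fin n → ℝ) : delta x 1 = 1 - ent x 1 := by
  simp [delta]

lemma delta_of_lt (x : Fin n → ℝ) {m : ℕ} (h : n < m) : delta x m = 1 := by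
  obtain ⟨m, rfl⟩ := Nat.exists_eq_add_of_lt h
  simp [delta, ent_of_lt x (by omega : n < n + m + 1)]

lemma one_sub_delta_succ (x : Fin n → ℝ) (m : ℕ) :
    1 - delta x (m + 1) = ent x (m + 1) * delta x m := by
  simp [delta]

variable {x : Fin n → ℝ}

lemma ent_pos (hx : x ∈ openCube n) {k : ℕ} (h1 : 1 ≤ k) (h : k ≤ n) : 0 < ent x k := by
  rw [ent_of_le x h1 h]
  exact (hx _ (Set.mem_univ _)).1

lemma ent_nonneg (hx : x ∈ openCube n) (k : ℕ) : 0 ≤ ent x k := by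
  unfold ent
  split_ifs
  exacts [(hx _ (Set.mem_univ _)).1.le, le_rfl]

lemma ent_lt_one (hx : x ∈ openCube n) (k : ℕ) : ent x k < 1 := by
  unfold ent
  split_ifs
  exacts [(hx _ (Set.mem_univ _)).2, one_pos]

lemma delta_pos (hx : x ∈ openCube n) (m : ℕ) : 0 < delta x m := by
  suffices 0 < delta x m ∧ delta x m ≤ 1 from this.1
  induction m with
  | zero => simp [delta]
  | succ m ih =>
    have h0 := ent_nonneg hx (m + 1)
    have h1 := ent_lt_one hx (m + 1)
    simp only [delta]
    constructor <;> nlinarith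

end Basic

-- `x_k = (1 - δ_{n+1-k}(y)) / δ_{n+2-k}(y)` in the 1-based indexing of `ent`.
def deltaRev (n : ℕ) (y : Fin n → ℝ) : Fin n → ℝ :=
  fun i => (1 - delta y (n - i)) / delta y (n + 1 - i)

section DeltaRev

variable {n : ℕ} {y : Fin n → ℝ}

lemma ent_deltaRev (y : Fin n → ℝ) {k : ℕ} (h1 : 1 ≤ k) (h : k ≤ n) :
    ent (deltaRev n y) k = (1 - delta y (n + 1 - k)) / delta y (n + 2 - k) := by
  rw [ent_of_le _ h1 h]
  show (1 - delta y (n - (k - 1))) / delta y (n + 1 - (k - 1)) = _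
  rw [show n - (k - 1) = n + 1 - k by omega, show n + 1 - (k - 1) = n + 2 - k by omega]

lemma ent_deltaRev_eq (y : Fin n → ℝ) {k : ℕ} (h1 : 1 ≤ k) (h : k ≤ n) :
    ent (deltaRev n y) k = ent y (n + 1 - k) * delta y (n - k) / delta y (n + 2 - k) := by
  rw [ent_deltaRev y h1 h, show n + 1 - k = n - k + 1 by omega, one_sub_delta_succ]

lemma one_sub_ent_deltaRev (hy : y ∈ openCube n) {k : ℕ} (h1 : 1 ≤ k) (h : k ≤ n) :
    1 - ent (deltaRev n y) k
      = (1 - ent y (n + 2 - k)) * delta y (n + 1 - k) / delta y (n + 2 - k) := by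
  have hd := (delta_pos hy (n + 2 - k)).ne'
  have hrec : delta y (n + 2 - k) = 1 - ent y (n + 2 - k) * delta y (n + 1 - k) := by
    rw [show n + 2 - k = n + 1 - k + 1 by omega]
    rfl
  rw [ent_deltaRev y h1 h]
  field_simp
  linarith

lemma delta_deltaRev (hy : y ∈ openCube n) {m : ℕ} (hm : m ≤ n + 1) :
    delta (deltaRev n y) m = delta y (n + 1 - m) := by
  induction m with
  | zero => simp [delta, delta_of_lt y (Nat.lt_succ_self n)]
  | succ m ih =>
    rcases Nat.lt_or_ge m n with hmn | hmn
    · have hd := (delta_pos hy (n + 1 - m)).ne'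
      rw [delta, ih (by omega), ent_deltaRev y (by omega) (by omega),
        show n + 2 - (m + 1) = n + 1 - m by omega, show n + 1 - (m + 1) = n - m by omega]
      field_simp
      ring
    · rw [show m = n by omega, delta_of_lt _ (Nat.lt_succ_self n), Nat.sub_self]
      rfl

lemma deltaRev_mem (hy : y ∈ openCube n) : deltaRev n y ∈ openCube n := by
  intro i _
  have h1 : 1 ≤ (i : ℕ) + 1 := by omega
  have h : (i : ℕ) + 1 ≤ n := i.isLt
  have hent := ent_deltaRev_eq y h1 h
  have hsub := one_sub_ent_deltaRev hy h1 h
  rw [ent_succ] at hent hsub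
  have hd (m : ℕ) := delta_pos hy m
  constructor
  · rw [hent]
    exact div_pos (mul_pos (ent_pos hy (by omega) (by omega)) (hd _)) (hd _)
  · have : 0 < 1 - deltaRev n y i := by
      rw [hsub]
      exact div_pos (mul_pos (sub_pos.2 (ent_lt_one hy _)) (hd _)) (hd _)
    linarith

lemma deltaRev_deltaRev (hy : y ∈ openCube n) : deltaRev n (deltaRev n y) = y := by
  funext i
  have hd := (delta_pos hy i).ne'
  rw [deltaRev, delta_deltaRev hy (by omega), delta_deltaRev hy (by omega),
    show n + 1 - (n - i) = i + 1 by omega, show n + 1 - (n + 1 - i) = i by omega,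
    one_sub_delta_succ, ent_succ]
  field_simp

lemma image_deltaRev_openCube : deltaRev n '' openCube n = openCube n :=
  Set.Subset.antisymm (by rintro _ ⟨y, hy, rfl⟩; exact deltaRev_mem hy)
    fun y hy => ⟨deltaRev n y, deltaRev_mem hy, deltaRev_deltaRev hy⟩

lemma injOn_deltaRev : Set.InjOn (deltaRev n) (openCube n) := fun u hu v hv h => by
  rw [← deltaRev_deltaRev hu, h, deltaRev_deltaRev hv]

end DeltaRev

section Jacobian

variable {n : ℕ}

def entCLM (n k : ℕ) : (Fin n → ℝ) →L[ℝ] ℝ :=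
  if h : k - 1 < n then ContinuousLinearMap.proj ⟨k - 1, h⟩ else 0

lemma entCLM_apply (k : ℕ) (x : Fin n → ℝ) : entCLM n k x = ent x k := by
  unfold entCLM ent
  split_ifs <;> rfl

def dDelta (x : Fin n → ℝ) : ℕ → (Fin n → ℝ) →L[ℝ] ℝ
  | 0 => 0
  | m + 1 => -(ent x (m + 1) • dDelta x m + delta x m • entCLM n (m + 1))

lemma hasFDerivAt_delta (x : Fin n → ℝ) (m : ℕ) :
    HasFDerivAt (fun x => delta x m) (dDelta x m) x := by
  induction m with
  | zero => exact hasFDerivAt_const 1 x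
  | succ m ih =>
    have hent : HasFDerivAt (fun x => ent x (m + 1)) (entCLM n (m + 1)) x := by
      rw [show (fun x => ent x (m + 1)) = entCLM n (m + 1) from
        funext fun x => (entCLM_apply _ x).symm]
      exact (entCLM n (m + 1)).hasFDerivAt
    exact (hent.mul ih).const_sub 1

lemma dDelta_single_of_le (x : Fin n → ℝ) {m : ℕ} {j : Fin n} (h : m ≤ j) :
    dDelta x m (Pi.single j 1) = 0 := by
  induction m with
  | zero => rfl
  | succ m ih =>
    simp [dDelta, ih (by omega), entCLM, show m < n by omega, Fin.ext_iff, show m ≠ j by omega]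

lemma dDelta_succ_single (x : Fin n → ℝ) (i : Fin n) :
    dDelta x (i + 1) (Pi.single i 1) = -delta x i := by
  simp [dDelta, dDelta_single_of_le x le_rfl, entCLM]

def deltaVec (x : Fin n → ℝ) : Fin n → ℝ := fun i => delta x (i + 1)

def dDeltaVec (x : Fin n → ℝ) : (Fin n → ℝ) →L[ℝ] (Fin n → ℝ) :=
  ContinuousLinearMap.pi fun i => dDelta x (i + 1)

lemma hasFDerivAt_deltaVec (x : Fin n → ℝ) : HasFDerivAt deltaVec (dDeltaVec x) x :=
  hasFDerivAt_pi.2 fun i => hasFDerivAt_delta x (i + 1)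

lemma det_dDeltaVec (x : Fin n → ℝ) : (dDeltaVec x).det = ∏ i : Fin n, -delta x i := by
  rw [ContinuousLinearMap.det, LinearMap.det_eq_prod_of_lowerTriangular]
  · simp [dDeltaVec, dDelta_succ_single]
  · intro i j hij
    exact dDelta_single_of_le x (Nat.succ_le_of_lt hij)

def revCLM (n : ℕ) : (Fin n → ℝ) →L[ℝ] (Fin n → ℝ) :=
  LinearMap.toContinuousLinearMap (LinearMap.funLeft ℝ ℝ Fin.rev)

lemma abs_det_revCLM : |(revCLM n).det| = 1 := by
  have hinv : (revCLM n).comp (revCLM n) = ContinuousLinearMap.id ℝ _ := by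
    ext z i
    simp [revCLM, LinearMap.funLeft]
  have h : (revCLM n).det * (revCLM n).det = 1 := by
    rw [← ContinuousLinearMap.det_comp, hinv, ContinuousLinearMap.det, ContinuousLinearMap.coe_id,
      LinearMap.det_id]
  rcases mul_self_eq_one_iff.1 h with h | h <;> simp [h]

variable {y : Fin n → ℝ}

lemma deltaVec_deltaRev (hy : y ∈ openCube n) :
    deltaVec (deltaRev n y) = revCLM n (deltaVec y) := by
  funext i
  simp only [deltaVec, revCLM, LinearMap.coe_toContinuousLinearMap', LinearMap.funLeft_apply,
    Fin.val_rev, delta_deltaRev hy (show (i : ℕ) + 1 ≤ n + 1 by omega)]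
  congr 1
  omega

lemma differentiableAt_deltaRev (hy : y ∈ openCube n) : DifferentiableAt ℝ (deltaRev n) y := by
  refine differentiableAt_pi.2 fun i => ?_
  show DifferentiableAt ℝ (fun y => (1 - delta y (n - i)) / delta y (n + 1 - i)) y
  have hnum : DifferentiableAt ℝ (fun y => 1 - delta y (n - i)) y :=
    (hasFDerivAt_delta y _).differentiableAt.const_sub 1
  simp only [div_eq_mul_inv]
  exact hnum.mul ((hasFDerivAt_delta y _).differentiableAt.inv (delta_pos hy _).ne')

lemma prod_delta_deltaRev (hy : y ∈ openCube n) :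
    (∏ i : Fin n, delta (deltaRev n y) i) * delta y 1
      = (∏ i : Fin n, delta y i) * delta y n := by
  have h := prod_range_mul_eq_prod_range_add_two_mul (delta y) n
  rw [delta_of_lt y (Nat.lt_succ_self n), show delta y 0 = 1 from rfl, mul_one, one_mul] at h
  rw [Fin.prod_univ_eq_prod_range (fun i => delta (deltaRev n y) i),
    Fin.prod_univ_eq_prod_range (delta y), h, ← prod_range_reflect]
  congr 1
  refine prod_congr rfl fun i hi => ?_
  rw [mem_range] at hi
  rw [delta_deltaRev hy (by omega)]
  congr 1
  omega

lemma abs_det_fderiv_deltaRev (hy : y ∈ openCube n) :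
    |(fderiv ℝ (deltaRev n) y).det| = delta y 1 / delta y n := by
  have hcomp : (dDeltaVec (deltaRev n y)).comp (fderiv ℝ (deltaRev n) y)
      = (revCLM n).comp (dDeltaVec y) := by
    refine ((hasFDerivAt_deltaVec _).comp y (differentiableAt_deltaRev hy).hasFDerivAt).unique ?_
    refine ((revCLM n).hasFDerivAt.comp y (hasFDerivAt_deltaVec y)).congr_of_eventuallyEq ?_
    filter_upwards [isOpen_openCube.mem_nhds hy] with z hz using deltaVec_deltaRev hz
  have hdet : (dDeltaVec (deltaRev n y)).det * (fderiv ℝ (deltaRev n) y).det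
      = (revCLM n).det * (dDeltaVec y).det := by
    simpa only [ContinuousLinearMap.det_comp] using congrArg ContinuousLinearMap.det hcomp
  have habs := congrArg abs hdet
  simp only [abs_mul, abs_det_revCLM, det_dDeltaVec, abs_prod, abs_neg, one_mul,
    abs_of_pos (delta_pos hy _), abs_of_pos (delta_pos (deltaRev_mem hy) _)] at habs
  have hpos : 0 < ∏ i : Fin n, delta (deltaRev n y) i :=
    prod_pos fun i _ => delta_pos (deltaRev_mem hy) i
  rw [eq_div_iff (delta_pos hy n).ne']
  apply mul_left_cancel₀ hpos.ne'
  rw [← mul_assoc, habs, prod_delta_deltaRev hy]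

end Jacobian

-- With `u j = log y_j`, `v j = log (1 - y_j)`, `w j = log δ_j(y)`, the left side is the logarithm
-- of the integrand of `p` at `deltaRev n y`, up to its last factor. Since `1 - y_1 = δ_1(y)`, the
-- coefficient of `w 1` moves to `v 1`, which is where `b'_1` comes from.
lemma sum_exponents_reflect {n : ℕ} (hn : 2 ≤ n) (a b c : ℕ → ℤ) {u v w : ℕ → ℝ}
    (hw : ∀ j ∉ Icc 1 n, w j = 0) (hv : v (n + 1) = 0) (hvw : v 1 = w 1) :
    ∑ k ∈ Icc 1 n, ((a k : ℝ) * (u (n + 1 - k) + w (n - k) - w (n + 2 - k))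
        + b k * (v (n + 2 - k) + w (n + 1 - k) - w (n + 2 - k)))
      - ∑ k ∈ Icc 2 n, (c k : ℝ) * w (n + 1 - k)
    = ∑ k ∈ Icc 1 n, ((a (n + 1 - k) : ℝ) * u k
        + ((if k = 1 then a (n - 1) + b n - c n else b (n + 2 - k) : ℤ) : ℝ) * v k)
      - ∑ k ∈ Icc 2 n, ((if k = n then a 2 + b 2 - b 1
          else a (n + 2 - k) + b (n + 2 - k) + c (n + 1 - k) - b (n + 1 - k) - a (n - k) : ℤ) : ℝ)
          * w k := by
  have hw' {l d : ℕ} : ∀ k ∈ Icc l n, d - k ∉ Icc 1 n → w (d - k) = 0 := fun _ _ => hw _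
  have hu : ∀ k ∈ Icc 1 n, n + 1 - k ∉ Icc 1 n → u (n + 1 - k) = 0 := by
    intro k hk hout; simp only [mem_Icc] at hk hout; omega
  have hv' : ∀ k ∈ Icc 1 n, n + 2 - k ∉ Icc 1 n → v (n + 2 - k) = 0 := by
    intro k hk hout
    simp only [mem_Icc] at hk hout
    rwa [show n + 2 - k = n + 1 by omega]
  simp only [mul_add, mul_sub, sum_add_distrib, sum_sub_distrib]
  rw [sum_Icc_mul_reflect _ _ (by omega) hu, sum_Icc_mul_reflect _ _ le_rfl hw',
    sum_Icc_mul_reflect _ _ (by omega : n ≤ n + 2) hw', sum_Icc_mul_reflect _ _ (by omega) hv',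
    sum_Icc_mul_reflect _ _ (by omega : n ≤ n + 1) hw',
    sum_Icc_mul_reflect _ _ (by omega : n ≤ n + 2) hw',
    sum_Icc_mul_reflect _ _ (by omega : n ≤ n + 1) hw',
    sum_Icc_eq_sum_Icc_ite _ (by omega : 1 ≤ 2)]
  simp only [← sum_add_distrib, ← sum_sub_distrib]
  refine sum_congr rfl fun j hj => ?_
  rw [mem_Icc] at hj
  simp only [mem_Icc]
  rcases (by omega : j = 1 ∨ (2 ≤ j ∧ j < n) ∨ j = n) with rfl | hj' | rfl
  · simp (disch := omega) only [if_pos, if_neg, Nat.add_sub_cancel, hvw]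
    push_cast
    ring
  · simp (disch := omega) only [if_pos, if_neg]
    push_cast
    ring
  · simp (disch := omega) only [if_pos, if_neg, Nat.add_sub_cancel_left]
    push_cast
    ring

def integrand (n : ℕ) (a b c : ℕ → ℤ) (x : Fin n → ℝ) : ℝ :=
  (∏ k ∈ Icc 1 n, ent x k ^ a k * (1 - ent x k) ^ b k) /
    ((∏ k ∈ Icc 2 n, delta x k ^ c k) * delta x n)

section Integrand

open Real

variable {n : ℕ} {x y : Fin n → ℝ}

lemma integrand_pos (hx : x ∈ openCube n) (a b c : ℕ → ℤ) : 0 < integrand n a b c x := by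
  have hent : ∀ k ∈ Icc 1 n, 0 < ent x k := fun k hk => by
    rw [mem_Icc] at hk; exact ent_pos hx hk.1 hk.2
  have hsub : ∀ k, 0 < 1 - ent x k := fun k => sub_pos.2 (ent_lt_one hx k)
  refine div_pos (prod_pos fun k hk => ?_) (mul_pos (prod_pos fun k _ => ?_) (delta_pos hx n))
  · exact mul_pos (zpow_pos (hent k hk) _) (zpow_pos (hsub k) _)
  · exact zpow_pos (delta_pos hx k) _

lemma log_integrand (hx : x ∈ openCube n) (a b c : ℕ → ℤ) :
    log (integrand n a b c x)
      = ∑ k ∈ Icc 1 n, (a k * log (ent x k) + b k * log (1 - ent x k))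
        - ∑ k ∈ Icc 2 n, c k * log (delta x k) - log (delta x n) := by
  have hent : ∀ k ∈ Icc 1 n, ent x k ≠ 0 := fun k hk => by
    rw [mem_Icc] at hk; exact (ent_pos hx hk.1 hk.2).ne'
  have hsub : ∀ k, 1 - ent x k ≠ 0 := fun k => (sub_pos.2 (ent_lt_one hx k)).ne'
  have hdelta : ∀ k, delta x k ≠ 0 := fun k => (delta_pos hx k).ne'
  have hnum : ∀ k ∈ Icc 1 n, ent x k ^ a k * (1 - ent x k) ^ b k ≠ 0 := fun k hk =>
    mul_ne_zero (zpow_ne_zero _ (hent k hk)) (zpow_ne_zero _ (hsub k))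
  have hden : ∀ k ∈ Icc 2 n, delta x k ^ c k ≠ 0 := fun k _ => zpow_ne_zero _ (hdelta k)
  rw [integrand, log_div (prod_ne_zero_iff.2 hnum)
      (mul_ne_zero (prod_ne_zero_iff.2 hden) (hdelta n)),
    log_mul (prod_ne_zero_iff.2 hden) (hdelta n), log_prod hnum, log_prod hden]
  rw [sum_congr rfl fun k hk => by
      rw [log_mul (zpow_ne_zero _ (hent k hk)) (zpow_ne_zero _ (hsub k)), log_zpow, log_zpow],
    sum_congr rfl fun k _ => log_zpow (delta x k) (c k)]
  ring

lemma integrand_deltaRev (hn : 2 ≤ n) (hy : y ∈ openCube n) (a b c : ℕ → ℤ) :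
    delta y 1 / delta y n * integrand n a b c (deltaRev n y)
      = integrand n (fun k => a (n + 1 - k))
          (fun k => if k = 1 then a (n - 1) + b n - c n else b (n + 2 - k))
          (fun k => if k = n then a 2 + b 2 - b 1
            else a (n + 2 - k) + b (n + 2 - k) + c (n + 1 - k) - b (n + 1 - k) - a (n - k)) y := by
  have hSy := deltaRev_mem hy
  have hdelta : ∀ k, delta y k ≠ 0 := fun k => (delta_pos hy k).ne'
  have hlog_ent : ∀ k ∈ Icc 1 n, log (ent (deltaRev n y) k)
      = log (ent y (n + 1 - k)) + log (delta y (n - k)) - log (delta y (n + 2 - k)) := by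
    intro k hk
    rw [mem_Icc] at hk
    rw [ent_deltaRev_eq y hk.1 hk.2, log_div (mul_ne_zero (ent_pos hy (by omega) (by omega)).ne'
      (hdelta _)) (hdelta _), log_mul (ent_pos hy (by omega) (by omega)).ne' (hdelta _)]
  have hlog_sub : ∀ k ∈ Icc 1 n, log (1 - ent (deltaRev n y) k)
      = log (1 - ent y (n + 2 - k)) + log (delta y (n + 1 - k)) - log (delta y (n + 2 - k)) := by
    intro k hk
    rw [mem_Icc] at hk
    have hsub := (sub_pos.2 (ent_lt_one hy (n + 2 - k))).ne'
    rw [one_sub_ent_deltaRev hy hk.1 hk.2, log_div (mul_ne_zero hsub (hdelta _)) (hdelta _),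
      log_mul hsub (hdelta _)]
  have hsum_delta : ∑ k ∈ Icc 2 n, (c k : ℝ) * log (delta (deltaRev n y) k)
      = ∑ k ∈ Icc 2 n, (c k : ℝ) * log (delta y (n + 1 - k)) := by
    refine sum_congr rfl fun k hk => ?_
    rw [mem_Icc] at hk
    rw [delta_deltaRev hy (by omega)]
  have key := sum_exponents_reflect hn a b c (u := fun j => log (ent y j))
    (v := fun j => log (1 - ent y j)) (w := fun j => log (delta y j))
    (fun j hj => by
      rw [mem_Icc] at hj
      rcases Nat.eq_zero_or_pos j with rfl | hj0
      · simp [delta]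
      · simp [delta_of_lt y (by omega : n < j)])
    (by simp [ent_of_lt y (Nat.lt_succ_self n)]) (by simp [delta_one])
  refine log_injOn_pos (Set.mem_Ioi.2 (mul_pos (div_pos (delta_pos hy 1) (delta_pos hy n))
    (integrand_pos hSy a b c))) (integrand_pos hy _ _ _) ?_
  rw [log_mul (div_pos (delta_pos hy 1) (delta_pos hy n)).ne' (integrand_pos hSy a b c).ne',
    log_div (hdelta 1) (hdelta n), log_integrand hSy, log_integrand hy,
    sum_congr rfl fun k hk => by rw [hlog_ent k hk, hlog_sub k hk], hsum_delta,
    delta_deltaRev hy (by omega), Nat.add_sub_cancel_left]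
  linear_combination key

end Integrand

lemma Lint_eq_setLIntegral_openCube (n : ℕ) (a b c : ℕ → ℤ) :
    Lint n a b c = ∫⁻ x in openCube n, ENNReal.ofReal (integrand n a b c x) :=
  setLIntegral_congr cube_ae_eq_openCube

theorem stmt10 (n : ℕ) (hn : 2 ≤ n) (a b c : ℕ → ℤ) :
    Lint n a b c =
      Lint n (fun k => a (n + 1 - k))
        (fun k => if k = 1 then a (n - 1) + b n - c n else b (n + 2 - k))
        (fun k => if k = n then a 2 + b 2 - b 1
          else a (n + 2 - k) + b (n + 2 - k) + c (n + 1 - k) - b (n + 1 - k) - a (n - k)) := by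
  rw [Lint_eq_setLIntegral_openCube, Lint_eq_setLIntegral_openCube]
  conv_lhs => rw [← image_deltaRev_openCube]
  rw [lintegral_image_eq_lintegral_abs_det_fderiv_mul volume isOpen_openCube.measurableSet
    (fun y hy => (differentiableAt_deltaRev hy).hasFDerivAt.hasFDerivWithinAt) injOn_deltaRev]
  refine setLIntegral_congr_fun isOpen_openCube.measurableSet fun y hy => ?_
  rw [← ENNReal.ofReal_mul (abs_nonneg _), abs_det_fderiv_deltaRev hy, integrand_deltaRev hn hy]

end
end

section
/- For every integer n ≥ 4, the set 𝓔 is stable under σ and under ψ: if p ∈ 𝓔 then σ(p) ∈ 𝓔 and ψ(p) ∈ 𝓔. Here σ is the automorphism of ℤ^{3n−1} exchanging a_1 with b_2 and a_2 with b_1 and fixing the other coordinates, and ψ sends p to p′ with a′_k = a_{n+1−k} (1 ≤ k ≤ n), b′_k = b_{n+2−k} (2 ≤ k ≤ n), b′_1 = a_{n−1} + b_n − c_n, c′_k = a_{n+2−k} + b_{n+2−k} + c_{n+1−k} − b_{n+1−k} − a_{n−k} (2 ≤ k ≤ n−1), c′_n = a_2 + b_2 − b_1. -/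
/-!
For `n ≥ 4`, membership in `ℰ` amounts to `c_k = 0` for `2 ≤ k ≤ n - 1`, `a_2 = b_1`,
`b_n = c_n` and the recurrence `a_k + b_{k+1} = a_{k+2} + b_{k+2}`. The swap `σ` preserves the
recurrence at `k = 1` by symmetry and at `k = 2` because `a_2 = b_1`. Under `ψ`, the recurrence
of `p` read backwards is that of `ψ p`, and each new `c'_k` with `2 ≤ k ≤ n - 1` equals `c_{n+1-k}`
plus the defect of the recurrence at `n - k`, hence vanishes.
-/

open MeasureTheory Finset
open scoped ENNReal

noncomputable section

/-- Membership in the set `ℰ`, in terms of the components of `p`. -/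
def memE (n : ℕ) (a b c : ℕ → ℤ) : Prop :=
  (∀ k, 2 ≤ k → k ≤ n - 1 → c k = 0) ∧
  (n = 3 → a 1 + b 2 = a 3 + b 3) ∧
  (4 ≤ n → a 2 = b 1 ∧ b n = c n ∧
    ∀ k, 1 ≤ k → k ≤ n - 2 → a k + b (k + 1) = a (k + 2) + b (k + 2))

theorem memE_iff_of_four_le {n : ℕ} (hn : 4 ≤ n) {a b c : ℕ → ℤ} :
    memE n a b c ↔ (∀ k, 2 ≤ k → k ≤ n - 1 → c k = 0) ∧ a 2 = b 1 ∧ b n = c n ∧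
      ∀ k, 1 ≤ k → k ≤ n - 2 → a k + b (k + 1) = a (k + 2) + b (k + 2) := by
  have h3 : n ≠ 3 := by omega
  simp only [memE, h3, false_implies, true_and, hn, true_implies]

theorem memE_swap {n : ℕ} (hn : 4 ≤ n) {a b c : ℕ → ℤ} (hp : memE n a b c) :
    memE n (fun k => if k = 1 then b 2 else if k = 2 then b 1 else a k)
      (fun k => if k = 1 then a 2 else if k = 2 then a 1 else b k) c := by
  obtain ⟨hc, hab, hbc, hrec⟩ := (memE_iff_of_four_le hn).1 hp
  refine (memE_iff_of_four_le hn).2 ⟨hc, by simp [hab], ?_, ?_⟩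
  · have hn1 : n ≠ 1 := by omega
    have hn2 : n ≠ 2 := by omega
    simpa [hn1, hn2] using hbc
  · intro k hk1 hk2
    rcases (by omega : k = 1 ∨ k = 2 ∨ 3 ≤ k) with rfl | rfl | hk3
    · simpa [add_comm] using hrec 1 le_rfl (by omega)
    · simpa [hab] using hrec 2 (by omega) (by omega)
    · have hk0 : k ≠ 0 := by omega
      have hk1' : k ≠ 1 := by omega
      have hk2' : k ≠ 2 := by omega
      simpa [hk0, hk1', hk2'] using hrec k hk1 hk2

theorem memE_reflect {n : ℕ} (hn : 4 ≤ n) {a b c : ℕ → ℤ} (hp : memE n a b c) :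
    memE n (fun k => a (n + 1 - k))
      (fun k => if k = 1 then a (n - 1) + b n - c n else b (n + 2 - k))
      (fun k => if k = n then a 2 + b 2 - b 1
        else a (n + 2 - k) + b (n + 2 - k) + c (n + 1 - k) - b (n + 1 - k) - a (n - k)) := by
  obtain ⟨hc, hab, hbc, hrec⟩ := (memE_iff_of_four_le hn).1 hp
  have hn1 : n ≠ 1 := by omega
  refine (memE_iff_of_four_le hn).2 ⟨?_, ?_, by simp [hn1, hab], ?_⟩
  · intro k hk2 hkn
    obtain ⟨j, rfl⟩ : ∃ j, k = n - j := ⟨n - k, by omega⟩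
    have hkn : n - j ≠ n := by omega
    rw [if_neg hkn, show n + 2 - (n - j) = j + 2 by omega, show n + 1 - (n - j) = j + 1 by omega,
      show n - (n - j) = j by omega, hc (j + 1) (by omega) (by omega)]
    linarith [hrec j (by omega) (by omega)]
  · simp [show n + 1 - 2 = n - 1 by omega, hbc]
  · intro k hk1 hk2
    obtain ⟨j, rfl⟩ : ∃ j, k = n - 1 - j := ⟨n - 1 - k, by omega⟩
    rw [if_neg (show n - 1 - j + 1 ≠ 1 by omega), if_neg (show n - 1 - j + 2 ≠ 1 by omega),
      show n + 1 - (n - 1 - j) = j + 2 by omega, show n + 2 - (n - 1 - j + 1) = j + 2 by omega,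
      show n + 1 - (n - 1 - j + 2) = j by omega, show n + 2 - (n - 1 - j + 2) = j + 1 by omega]
    linarith [hrec j (by omega) (by omega)]

theorem stmt14 (n : ℕ) (hn : 4 ≤ n) (a b c : ℕ → ℤ) (hp : memE n a b c) :
    memE n (fun k => if k = 1 then b 2 else if k = 2 then b 1 else a k)
      (fun k => if k = 1 then a 2 else if k = 2 then a 1 else b k) c ∧
    memE n (fun k => a (n + 1 - k))
      (fun k => if k = 1 then a (n - 1) + b n - c n else b (n + 2 - k))
      (fun k => if k = n then a 2 + b 2 - b 1
        else a (n + 2 - k) + b (n + 2 - k) + c (n + 1 - k) - b (n + 1 - k) - a (n - k)) :=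
  ⟨memE_swap hn hp, memE_reflect hn hp⟩

end
end

section
/- For all integers a, b, c ≥ 0 with a + b − c ≥ 0 and every real β > −1, one has ∫_0^1 x^a (1−x)^b / (1+βx)^{c+1} dx = (a! b!)/(c! (a+b−c)!) · ∫_0^1 x^c (1−x)^{a+b−c} / (1+βx)^{a+1} dx. -/
/-!
Both sides are Beta-integral multiples of the integral over the unit square of
`s ^ c (1 - s) ^ (a + b - c) t ^ a (1 - t) ^ b / (1 + β s t) ^ (a + b + 2)`, computed once by
integrating first in `s` and once first in `t`. Each inner integral is evaluated by
`∫₀¹ x ^ p (1 - x) ^ q / (1 + w x) ^ (p + q + 2) dx = B(p, q) / (1 + w) ^ (p + 1)`, which is the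
substitution `u = (1 + w) x / (1 + w x)` (a bijection of `[0, 1]` for `w > -1`) in the Beta
integral `B(p, q) = ∫₀¹ u ^ p (1 - u) ^ q du = p! q! / (p + q + 1)!`.
-/

open MeasureTheory

lemma one_add_mul_pos {w x : ℝ} (hw : -1 < w) (hx : x ∈ Set.Icc (0:ℝ) 1) : 0 < 1 + w * x := by
  rcases le_total 0 w with h | h <;> nlinarith [hx.1, hx.2]

theorem integral_pow_mul_one_sub_pow (p q : ℕ) :
    ∫ x in (0:ℝ)..1, x ^ p * (1 - x) ^ q =
      (p.factorial * q.factorial : ℝ) / (p + q + 1).factorial := by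
  have h := Complex.betaIntegral_eq_Gamma_mul_div (p + 1) (q + 1)
    (by simp; positivity) (by simp; positivity)
  rw [show (p + 1 + (q + 1) : ℂ) = ↑(p + q + 1) + 1 by push_cast; ring,
    Complex.Gamma_nat_eq_factorial, Complex.Gamma_nat_eq_factorial,
    Complex.Gamma_nat_eq_factorial, Complex.betaIntegral] at h
  apply Complex.ofReal_injective
  rw [← intervalIntegral.integral_ofReal]
  push_cast
  rw [← h]
  refine intervalIntegral.integral_congr fun x _ => ?_
  simp only [add_sub_cancel_right]
  norm_cast

theorem integral_comp_moebius {w : ℝ} (hw : -1 < w) {g : ℝ → ℝ} (hg : Continuous g) :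
    ∫ x in (0:ℝ)..1, g ((1 + w) * x / (1 + w * x)) * ((1 + w) / (1 + w * x) ^ 2) =
      ∫ u in (0:ℝ)..1, g u := by
  have hpos : ∀ x ∈ Set.uIcc (0:ℝ) 1, 0 < 1 + w * x := fun x hx =>
    one_add_mul_pos hw (by rwa [Set.uIcc_of_le zero_le_one] at hx)
  have hderiv : ∀ x ∈ Set.uIcc (0:ℝ) 1, HasDerivAt (fun x => (1 + w) * x / (1 + w * x))
      ((1 + w) / (1 + w * x) ^ 2) x := by
    intro x hx
    have := ((hasDerivAt_id x).const_mul (1 + w)).div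
      (((hasDerivAt_id x).const_mul w).const_add 1) (hpos x hx).ne'
    refine this.congr_deriv ?_
    simp only [id, mul_one]
    ring
  have hcont : ContinuousOn (fun x => (1 + w) / (1 + w * x) ^ 2) (Set.uIcc (0:ℝ) 1) :=
    continuousOn_const.div (by fun_prop) fun x hx => pow_ne_zero _ (hpos x hx).ne'
  simpa [div_self (show 1 + w ≠ 0 by linarith)] using
    intervalIntegral.integral_comp_mul_deriv hderiv hcont hg

theorem integral_pow_mul_one_sub_pow_div_one_add_mul_pow (p q : ℕ) {w : ℝ} (hw : -1 < w) :
    ∫ x in (0:ℝ)..1, x ^ p * (1 - x) ^ q / (1 + w * x) ^ (p + q + 2) =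
      (∫ x in (0:ℝ)..1, x ^ p * (1 - x) ^ q) / (1 + w) ^ (p + 1) := by
  have hw' : (1 + w) ^ (p + 1) ≠ 0 := pow_ne_zero _ (by linarith)
  rw [← integral_comp_moebius hw (by fun_prop : Continuous fun u : ℝ => u ^ p * (1 - u) ^ q),
    eq_div_iff hw', ← intervalIntegral.integral_mul_const]
  refine intervalIntegral.integral_congr fun x hx => ?_
  have hx' := (one_add_mul_pos hw (by rwa [Set.uIcc_of_le zero_le_one] at hx)).ne'
  have h1 : 1 - (1 + w) * x / (1 + w * x) = (1 - x) / (1 + w * x) := by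
    field_simp
    ring
  simp only [h1, div_pow, mul_pow, pow_add, pow_one]
  field_simp

theorem intervalIntegral_intervalIntegral_swap_of_continuousOn {E : Type*}
    [NormedAddCommGroup E] [NormedSpace ℝ E] {F : ℝ → ℝ → E} {a b c d : ℝ}
    (hF : ContinuousOn (Function.uncurry F) (Set.uIcc a b ×ˢ Set.uIcc c d)) :
    ∫ x in a..b, ∫ y in c..d, F x y = ∫ y in c..d, ∫ x in a..b, F x y :=
  intervalIntegral_intervalIntegral_swap <|
    (hF.integrableOn_compact (isCompact_uIcc.prod isCompact_uIcc)).mono_set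
      (Set.prod_mono Set.uIoc_subset_uIcc Set.uIoc_subset_uIcc)

theorem integral_mul_integral_div_one_add_mul_pow_comm {a b c d : ℕ} (h : c + d = a + b)
    {β : ℝ} (hβ : -1 < β) :
    (∫ x in (0:ℝ)..1, x ^ c * (1 - x) ^ d) *
        ∫ x in (0:ℝ)..1, x ^ a * (1 - x) ^ b / (1 + β * x) ^ (c + 1) =
      (∫ x in (0:ℝ)..1, x ^ a * (1 - x) ^ b) *
        ∫ x in (0:ℝ)..1, x ^ c * (1 - x) ^ d / (1 + β * x) ^ (a + 1) := by
  set K : ℝ → ℝ → ℝ := fun s t =>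
    s ^ c * (1 - s) ^ d * (t ^ a * (1 - t) ^ b) / (1 + β * (s * t)) ^ (a + b + 2)
  have hβx : ∀ x ∈ Set.uIcc (0:ℝ) 1, -1 < β * x := fun x hx => by
    have := one_add_mul_pos hβ (by rwa [Set.uIcc_of_le zero_le_one] at hx)
    linarith
  have h_ds : ∀ t ∈ Set.uIcc (0:ℝ) 1, ∫ s in (0:ℝ)..1, K s t =
      (∫ x in (0:ℝ)..1, x ^ c * (1 - x) ^ d) * (t ^ a * (1 - t) ^ b / (1 + β * t) ^ (c + 1)) := by
    intro t ht
    have hK : ∀ s, K s t = t ^ a * (1 - t) ^ b *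
        (s ^ c * (1 - s) ^ d / (1 + β * t * s) ^ (c + d + 2)) := fun s => by
      simp only [K, h]
      ring
    simp only [hK, intervalIntegral.integral_const_mul,
      integral_pow_mul_one_sub_pow_div_one_add_mul_pow c d (hβx t ht)]
    ring
  have h_dt : ∀ s ∈ Set.uIcc (0:ℝ) 1, ∫ t in (0:ℝ)..1, K s t =
      (∫ x in (0:ℝ)..1, x ^ a * (1 - x) ^ b) * (s ^ c * (1 - s) ^ d / (1 + β * s) ^ (a + 1)) := by
    intro s hs
    have hK : ∀ t, K s t = s ^ c * (1 - s) ^ d *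
        (t ^ a * (1 - t) ^ b / (1 + β * s * t) ^ (a + b + 2)) := fun t => by
      simp only [K]
      ring
    simp only [hK, intervalIntegral.integral_const_mul,
      integral_pow_mul_one_sub_pow_div_one_add_mul_pow a b (hβx s hs)]
    ring
  have hK_cont : ContinuousOn (Function.uncurry K) (Set.uIcc (0:ℝ) 1 ×ˢ Set.uIcc (0:ℝ) 1) := by
    refine ContinuousOn.div (by fun_prop) (by fun_prop) fun p hp => pow_ne_zero _ ?_
    rw [Set.uIcc_of_le zero_le_one] at hp
    exact (one_add_mul_pos hβ ⟨mul_nonneg hp.1.1 hp.2.1, mul_le_one₀ hp.1.2 hp.2.1 hp.2.2⟩).ne'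
  rw [← intervalIntegral.integral_const_mul, ← intervalIntegral.integral_const_mul,
    ← intervalIntegral.integral_congr h_ds, ← intervalIntegral.integral_congr h_dt,
    intervalIntegral_intervalIntegral_swap_of_continuousOn hK_cont]

theorem stmt19 (a b c : ℕ) (h : c ≤ a + b) (β : ℝ) (hβ : -1 < β) :
    ∫ x in (0:ℝ)..1, x ^ a * (1 - x) ^ b / (1 + β * x) ^ (c + 1) =
      (Nat.factorial a * Nat.factorial b : ℝ) /
          (Nat.factorial c * Nat.factorial (a + b - c)) *
        ∫ x in (0:ℝ)..1, x ^ c * (1 - x) ^ (a + b - c) / (1 + β * x) ^ (a + 1) := by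
  have hcd : c + (a + b - c) = a + b := Nat.add_sub_cancel' h
  have key := integral_mul_integral_div_one_add_mul_pow_comm hcd hβ
  rw [integral_pow_mul_one_sub_pow, integral_pow_mul_one_sub_pow, hcd] at key
  rw [div_mul_eq_mul_div, div_mul_eq_mul_div, div_left_inj' (by positivity)] at key
  rw [div_mul_eq_mul_div, eq_div_iff (by positivity)]
  linear_combination key
end
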